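/- arXiv:1503.05803 — 2 statements merged into one kernel-verified Lean document; each statement's English description precedes it below -/
import Mathlib

section
/- Let F be a perfect field of characteristic p > 0 and f ∈ F[[t]] with f ∉ F[[t]]^p. Then for every n < ω there exists N < ω such that every b ∈ F[[t]] with v(b - f) > N can be written as b = f ∘ s (composition of power series) for some s ∈ F[[t]] with v(s - t) ≥ n, i.e. the composition image f(t + M^n) contains the open ball B(N; f) = { b : v(b - f) > N }. -/
/-- Composition (substitution) of power series: `(pscomp f s)` is `f ∘ s = Σ_i a_i s^i`,
well defined when `s` has zero constant term, in which case the `n`-th coefficient only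
involves `a_i` for `i ≤ n`. -/
noncomputable def pscomp {F : Type*} [Field F] (f s : PowerSeries F) : PowerSeries F :=
  PowerSeries.mk fun n =>
    ∑ i ∈ Finset.range (n + 1), PowerSeries.coeff i f * PowerSeries.coeff n (s ^ i)

open PowerSeries

section Aux

variable {F : Type*} [Field F]

lemma coeff_pscomp (f s : PowerSeries F) (n : ℕ) :
    coeff n (pscomp f s) = ∑ i ∈ Finset.range (n + 1), coeff i f * coeff n (s ^ i) :=
  coeff_mk _ _

lemma coeff_pscomp_X (f : PowerSeries F) (D : ℕ) : coeff D (pscomp f X) = coeff D f := by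
  rw [coeff_pscomp, Finset.sum_eq_single D]
  · simp [coeff_X_pow]
  · intro i _ hne
    rw [coeff_X_pow, if_neg (Ne.symm hne), mul_zero]
  · intro h
    exact absurd (Finset.self_mem_range_succ D) h

/-- Newton binomial with remainder. -/
lemma newton_pow {A : Type*} [CommRing A] (s e : A) (i : ℕ) :
    ∃ r : A, (s + e) ^ i = s ^ i + (i : A) * s ^ (i - 1) * e + e ^ 2 * r := by
  induction i with
  | zero => exact ⟨0, by simp⟩
  | succ j ih =>
    obtain ⟨r, hr⟩ := ih
    refine ⟨(j : A) * s ^ (j - 1) + r * (s + e), ?_⟩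
    have h1 : (j : A) * s ^ (j - 1) * s = (j : A) * s ^ j := by
      cases j with
      | zero => simp
      | succ i => rw [Nat.succ_sub_one, mul_assoc, ← pow_succ]
    calc (s + e) ^ (j + 1) = (s ^ j + (j : A) * s ^ (j - 1) * e + e ^ 2 * r) * (s + e) := by
          rw [pow_succ, hr]
      _ = s ^ j * s + s ^ j * e + ((j : A) * s ^ (j - 1) * s) * e
            + e ^ 2 * ((j : A) * s ^ (j - 1) + r * (s + e)) := by ring
      _ = _ := by
          rw [h1, ← pow_succ, Nat.succ_sub_one]
          push_cast
          ring

lemma coeff_eq_zero_of_X_pow_dvd {g : PowerSeries F} {k D : ℕ} (h : X ^ k ∣ g) (hD : D < k) :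
    coeff D g = 0 :=
  X_pow_dvd_iff.mp h D hD

lemma coeff_mul_of_dvd {g h : PowerSeries F} {a b : ℕ} (hg : X ^ a ∣ g) (hh : X ^ b ∣ h) :
    coeff (a + b) (g * h) = coeff a g * coeff b h := by
  obtain ⟨g', rfl⟩ := hg
  obtain ⟨h', rfl⟩ := hh
  have e1 : X ^ a * g' * (X ^ b * h') = X ^ (a + b) * (g' * h') := by ring
  have e2 : coeff (a + b) (X ^ (a + b) * (g' * h')) = coeff 0 (g' * h') := by
    simpa using coeff_X_pow_mul (g' * h') (a + b) 0
  have e3 : coeff a (X ^ a * g') = coeff 0 g' := by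
    simpa using coeff_X_pow_mul g' a 0
  have e4 : coeff b (X ^ b * h') = coeff 0 h' := by
    simpa using coeff_X_pow_mul h' b 0
  rw [e1, e2, e3, e4]
  simp [coeff_zero_eq_constantCoeff, map_mul]

lemma coeff_pow_self {s : PowerSeries F} (hs : constantCoeff s = 0) (i : ℕ) :
    coeff i (s ^ i) = (coeff 1 s) ^ i := by
  induction i with
  | zero => simp
  | succ j ih =>
    have hX : X ^ 1 ∣ s := by rw [pow_one, X_dvd_iff]; exact hs
    have hXj : X ^ j ∣ s ^ j := pow_dvd_pow_of_dvd (by rw [X_dvd_iff]; exact hs) j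
    rw [pow_succ, coeff_mul_of_dvd hXj hX, ih, pow_succ]

/-- The key Newton step computation. -/
lemma key_step (f s e : PowerSeries F) (m k D : ℕ)
    (hm : 1 ≤ m) (hmk : m ≤ k)
    (hsmall : ∀ i : ℕ, i < m → (i : F) * coeff i f = 0)
    (hs : constantCoeff s = 0) (he : X ^ k ∣ e) (hD : D ≤ k + m - 1) :
    coeff D (pscomp f (s + e)) =
      coeff D (pscomp f s) +
        (if D = k + m - 1 then
          (m : F) * coeff m f * (coeff 1 s) ^ (m - 1) * coeff k e else 0) := by
  have hXs : X ∣ s := X_dvd_iff.mpr hs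
  have hterm : ∀ i ∈ Finset.range (D + 1),
      coeff i f * coeff D ((s + e) ^ i) - coeff i f * coeff D (s ^ i) =
      (if i = m ∧ D = k + m - 1 then
        (m : F) * coeff m f * (coeff 1 s) ^ (m - 1) * coeff k e else 0) := by
    intro i _
    obtain ⟨r, hr⟩ := newton_pow s e i
    have hsm : (↑i * s ^ (i - 1) * e) = i • (s ^ (i - 1) * e) := by
      rw [nsmul_eq_mul, mul_assoc]
    have hquad : coeff D (e ^ 2 * r) = 0 := by
      obtain ⟨e', rfl⟩ := he
      have : X ^ (2 * k) ∣ (X ^ k * e') ^ 2 * r := ⟨e' ^ 2 * r, by ring⟩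
      exact coeff_eq_zero_of_X_pow_dvd this (by omega)
    have hlin : coeff D ((i : PowerSeries F) * s ^ (i - 1) * e) =
        (i : F) * coeff D (s ^ (i - 1) * e) := by
      rw [hsm, map_nsmul, nsmul_eq_mul]
    have hexp : coeff D ((s + e) ^ i) =
        coeff D (s ^ i) + (i : F) * coeff D (s ^ (i - 1) * e) := by
      rw [hr, map_add, map_add, hlin, hquad, add_zero]
    rw [hexp]
    by_cases him : i < m
    · have h0 : (i : F) * coeff i f = 0 := hsmall i him
      have : ¬ (i = m ∧ D = k + m - 1) := by rintro ⟨rfl, _⟩; omega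
      rw [if_neg this]
      linear_combination coeff D (s ^ (i - 1) * e) * h0
    · push_neg at him
      have hXpow : X ^ (i - 1 + k) ∣ s ^ (i - 1) * e := by
        rw [pow_add]
        exact mul_dvd_mul (pow_dvd_pow_of_dvd hXs (i - 1)) he
      by_cases hcase : i = m ∧ D = k + m - 1
      · obtain ⟨rfl, hDeq⟩ := hcase
        rw [if_pos ⟨rfl, hDeq⟩]
        have hDrw : D = (i - 1) + k := by omega
        rw [hDrw, coeff_mul_of_dvd (pow_dvd_pow_of_dvd hXs (i - 1)) he,
          coeff_pow_self hs]
        ring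
      · rw [if_neg hcase]
        have hDlt : D < i - 1 + k := by
          rcases eq_or_lt_of_le him with h | h
          · have : ¬ D = k + m - 1 := by
              intro hDD; exact hcase ⟨h.symm, hDD⟩
            omega
          · omega
        rw [coeff_eq_zero_of_X_pow_dvd hXpow hDlt]
        ring
  have hsum := Finset.sum_congr rfl hterm
  rw [Finset.sum_sub_distrib] at hsum
  rw [coeff_pscomp, coeff_pscomp, sub_eq_iff_eq_add'.mp hsum]
  congr 1
  by_cases hDeq : D = k + m - 1
  · rw [if_pos hDeq]
    rw [Finset.sum_eq_single m (fun i _ hne => by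
        rw [if_neg (show ¬ (i = m ∧ D = k + m - 1) from fun hc => hne hc.1)])
      (fun hnm => absurd (Finset.mem_range.mpr (by omega)) hnm)]
    rw [if_pos ⟨rfl, hDeq⟩]
  · rw [if_neg hDeq]
    exact Finset.sum_eq_zero fun i _ =>
      if_neg (show ¬ (i = m ∧ D = k + m - 1) from fun hc => hDeq hc.2)

/-- Successive approximations for the Newton iteration. -/
noncomputable def newtonSeq (f b : PowerSeries F) (m n' : ℕ) : ℕ → PowerSeries F
  | 0 => 0
  | k + 1 => newtonSeq f b m n' k +
      PowerSeries.C (if k = 1 then 1 else if k < n' then 0 else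
        (coeff (k + m - 1) b - coeff (k + m - 1) (pscomp f (newtonSeq f b m n' k))) /
          ((m : F) * coeff m f)) * X ^ k

lemma newtonSeq_coeff_hi (f b : PowerSeries F) (m n' : ℕ) :
    ∀ k j, k ≤ j → coeff j (newtonSeq f b m n' k) = 0 := by
  intro k
  induction k with
  | zero => intro j _; simp [newtonSeq]
  | succ K ih =>
    intro j hj
    rw [newtonSeq, map_add, ih j (by omega), coeff_C_mul, coeff_X_pow,
      if_neg (show ¬ j = K from by omega), mul_zero, add_zero]

lemma newtonSeq_coeff_stable (f b : PowerSeries F) (m n' : ℕ) :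
    ∀ K k j, j < k → k ≤ K → coeff j (newtonSeq f b m n' K) = coeff j (newtonSeq f b m n' k) := by
  intro K
  induction K with
  | zero => intro k j h1 h2; omega
  | succ K ih =>
    intro k j h1 h2
    rcases Nat.lt_or_ge k (K + 1) with h | h
    · rw [newtonSeq, map_add, coeff_C_mul, coeff_X_pow,
        if_neg (show ¬ j = K from by omega), mul_zero, add_zero]
      exact ih k j h1 (by omega)
    · have : k = K + 1 := by omega
      rw [this]

end Aux

/-- Hensel-like lemma: if `F` is perfect of characteristic `p > 0` and
`f ∈ F[[t]]` is not a `p`-th power, then for every `n` there is `N` such that every `b`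
with `v(b - f) > N` is of the form `f ∘ s` for some `s ∈ t + M^n`. -/
theorem statement3 (F : Type*) [Field F] (p : ℕ) [Fact (Nat.Prime p)] [CharP F p]
    [PerfectRing F p]
    (f : PowerSeries F) (hf : ∀ g : PowerSeries F, g ^ p ≠ f) (n : ℕ) :
    ∃ N : ℕ, ∀ b : PowerSeries F,
      (∀ h : ℕ, h ≤ N → PowerSeries.coeff h (b - f) = 0) →
      ∃ s : PowerSeries F,
        PowerSeries.constantCoeff s = 0 ∧
        (∀ h : ℕ, h < n → PowerSeries.coeff h (s - PowerSeries.X) = 0) ∧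
        pscomp f s = b := by
  classical
  have hp : p.Prime := Fact.out
  -- Step 1: there is an index not divisible by p with nonzero coefficient.
  have hex : ∃ i : ℕ, ¬ p ∣ i ∧ coeff i f ≠ 0 := by
    by_contra hcon
    push_neg at hcon
    haveI : CharP (PowerSeries F) p := charP_of_injective_ringHom (PowerSeries.C_injective) p
    set g : PowerSeries F := PowerSeries.mk fun j => (frobeniusEquiv F p).symm (coeff (p * j) f)
      with hg
    apply hf g
    ext D
    set T : Polynomial F := trunc (D + 1) g with hT
    have hdvd : X ^ (D + 1) ∣ (g - (T : PowerSeries F)) := by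
      rw [X_pow_dvd_iff]
      intro j hj
      rw [map_sub, Polynomial.coeff_coe, hT, coeff_trunc, if_pos hj, sub_self]
    have hsplit : g ^ p = (T : PowerSeries F) ^ p + (g - (T : PowerSeries F)) ^ p := by
      have h' : g = (T : PowerSeries F) + (g - (T : PowerSeries F)) := by ring
      conv_lhs => rw [h']
      rw [add_pow_char]
    have hzero : coeff D ((g - (T : PowerSeries F)) ^ p) = 0 := by
      refine coeff_eq_zero_of_X_pow_dvd (g := (g - (T : PowerSeries F)) ^ p)
        (k := (D + 1) * p) ?_ ?_
      · rw [pow_mul]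
        exact pow_dvd_pow_of_dvd hdvd p
      · have := hp.two_le; nlinarith
    rw [hsplit, map_add, hzero, add_zero, ← Polynomial.coe_pow, Polynomial.coeff_coe,
      ← Polynomial.map_frobenius_expand p T, Polynomial.coeff_map, Polynomial.coeff_expand hp.pos,
      apply_ite (frobenius F p)]
    by_cases hpd : p ∣ D
    · rw [if_pos hpd]
      have hlt : D / p < D + 1 := by
        have := Nat.div_le_self D p; omega
      rw [hT, coeff_trunc, if_pos hlt, hg, coeff_mk]
      rw [Nat.mul_div_cancel' hpd, frobenius_def]
      exact frobeniusEquiv_symm_pow_p F p _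
    · rw [if_neg hpd, map_zero]
      exact (hcon D hpd).symm
  set m := Nat.find hex with hm_def
  obtain ⟨hm_ndvd, hm_ne⟩ : ¬ p ∣ m ∧ coeff m f ≠ 0 := Nat.find_spec hex
  have hm1 : 1 ≤ m := by
    rcases Nat.eq_zero_or_pos m with h | h
    · exact absurd (h ▸ dvd_zero p) hm_ndvd
    · exact h
  have hsmall : ∀ i : ℕ, i < m → (i : F) * coeff i f = 0 := by
    intro i hi
    by_cases hc : coeff i f = 0
    · rw [hc, mul_zero]
    · have hmin := Nat.find_min hex hi
      push_neg at hmin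
      have hdvd : p ∣ i := by
        by_contra hnd
        exact hc (hmin hnd)
      rw [(CharP.cast_eq_zero_iff F p i).mpr hdvd, zero_mul]
  have hma : (m : F) * coeff m f ≠ 0 := by
    refine mul_ne_zero ?_ hm_ne
    intro h
    exact hm_ndvd ((CharP.cast_eq_zero_iff F p m).mp h)
  set n' := max n (m + 1) with hn'
  have hn2 : 2 ≤ n' := by omega
  have hnn : n ≤ n' := le_max_left _ _
  have hmn' : m + 1 ≤ n' := le_max_right _ _
  refine ⟨n' + m, fun b hb => ?_⟩
  set S : ℕ → PowerSeries F := newtonSeq f b m n' with hS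
  set s : PowerSeries F := PowerSeries.mk (fun j => coeff j (S (j + 1))) with hs_def
  have hstable : ∀ k j, j < k → coeff j s = coeff j (S k) := by
    intro k j hj
    rw [hs_def, coeff_mk]
    rcases Nat.lt_or_ge j k with _ | h
    · exact (newtonSeq_coeff_stable f b m n' k (j + 1) j (by omega) (by omega)).symm
    · omega
  have hdvdS : ∀ k, X ^ k ∣ (s - S k) := by
    intro k
    rw [X_pow_dvd_iff]
    intro j hj
    rw [map_sub, hstable k j hj, sub_self]
  have hval : ∀ k, coeff k s = (if k = 1 then 1 else if k < n' then 0 else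
      (coeff (k + m - 1) b - coeff (k + m - 1) (pscomp f (S k))) /
        ((m : F) * coeff m f)) := by
    intro k
    rw [hs_def, coeff_mk, hS, newtonSeq, map_add,
      newtonSeq_coeff_hi f b m n' k k le_rfl, coeff_C_mul, coeff_X_pow, if_pos rfl,
      mul_one, zero_add]
  have hc0 : coeff 0 s = 0 := by
    rw [hval 0, if_neg (by omega), if_pos (by omega)]
  have hc1 : coeff 1 s = 1 := by rw [hval 1, if_pos rfl]
  have hcmid : ∀ j, j ≠ 1 → j < n' → coeff j s = 0 := by
    intro j hj1 hjn
    rw [hval j, if_neg hj1, if_pos hjn]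
  -- s is close to X
  have hsX : ∀ j, j < n' → coeff j (s - X) = 0 := by
    intro j hj
    rw [map_sub, coeff_X]
    by_cases hj1 : j = 1
    · rw [if_pos hj1, hj1, hc1, sub_self]
    · rw [if_neg hj1, hcmid j hj1 hj, sub_zero]
  -- main computation
  refine ⟨s, by rw [← coeff_zero_eq_constantCoeff]; exact hc0,
    fun h hh => hsX h (by omega), ?_⟩
  ext D
  rcases Nat.lt_or_ge D (n' + m - 1) with hD | hD
  · -- low coefficients: f ∘ s ≡ f ≡ b
    have hdX : X ^ n' ∣ (s - X) := by
      rw [X_pow_dvd_iff]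
      intro j hj
      exact hsX j hj
    have := key_step f X (s - X) m n' D hm1 (by omega) hsmall constantCoeff_X hdX (by omega)
    rw [add_sub_cancel] at this
    rw [this, if_neg (by omega), add_zero, coeff_pscomp_X]
    have := hb D (by omega)
    rw [map_sub, sub_eq_zero] at this
    exact this.symm
  · -- high coefficients: by construction of the Newton iteration
    set k := D + 1 - m with hk
    have hDk : D = k + m - 1 := by omega
    have hkn : n' ≤ k := by omega
    have hs0 : constantCoeff (S k) = 0 := by
      rw [← coeff_zero_eq_constantCoeff, ← hstable k 0 (by omega)]
      exact hc0
    have hs1 : coeff 1 (S k) = 1 := by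
      rw [← hstable k 1 (by omega)]
      exact hc1
    have := key_step f (S k) (s - S k) m k D hm1 (by omega) hsmall hs0 (hdvdS k) (by omega)
    rw [add_sub_cancel] at this
    rw [this, if_pos hDk, hs1, one_pow, mul_one]
    have hck : coeff k (s - S k) =
        (coeff (k + m - 1) b - coeff (k + m - 1) (pscomp f (S k))) /
          ((m : F) * coeff m f) := by
      rw [map_sub, newtonSeq_coeff_hi f b m n' k k le_rfl, sub_zero, hval k,
        if_neg (by omega), if_neg (by omega)]
    rw [hck, hDk]
    field_simp
    rw [mul_div_cancel_left₀ _ (left_ne_zero_of_mul hma)]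
    ring
end

section
/- The composition (substitution) map ∘ : F((t)) × M → F((t)), (f, s) ↦ f ∘ s, where M = tF[[t]], is continuous with respect to the t-adic topology. -/
/-!
The `n`-th coefficient of `f ∘ s` is `Σ_{i ≤ n} a_i [t^n] s^i`, so it only involves the
coefficients of `f` and of `s` up to `n`: if `t^(n+1)` divides `g - f` and `r - s`, it also
divides `r^i - s^i`, and `g ∘ r`, `f ∘ s` have the same `n`-th coefficient. Hence `M = N` works.
-/

open PowerSeries

namespace PowerSeries

theorem X_pow_succ_dvd_iff {R : Type*} [CommRing R] {N : ℕ} {φ : R⟦X⟧} :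
    (X : R⟦X⟧) ^ (N + 1) ∣ φ ↔ ∀ n ≤ N, coeff n φ = 0 := by
  simp only [X_pow_dvd_iff, Nat.lt_succ_iff]

theorem coeff_eq_of_X_pow_succ_dvd_sub {R : Type*} [CommRing R] {N n : ℕ} {φ ψ : R⟦X⟧}
    (h : (X : R⟦X⟧) ^ (N + 1) ∣ φ - ψ) (hn : n ≤ N) : coeff n φ = coeff n ψ := by
  rw [← sub_eq_zero, ← map_sub]
  exact X_pow_succ_dvd_iff.mp h n hn

end PowerSeries

theorem coeff_pscomp_eq_of_X_pow_succ_dvd_sub {F : Type*} [Field F] {f g r s : F⟦X⟧} {n : ℕ}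
    (hgf : (X : F⟦X⟧) ^ (n + 1) ∣ g - f) (hrs : (X : F⟦X⟧) ^ (n + 1) ∣ r - s) :
    coeff n (pscomp g r) = coeff n (pscomp f s) := by
  simp only [pscomp, coeff_mk]
  refine Finset.sum_congr rfl fun i hi => ?_
  have hi : i ≤ n := Nat.lt_succ_iff.mp (Finset.mem_range.mp hi)
  rw [coeff_eq_of_X_pow_succ_dvd_sub hgf hi,
    coeff_eq_of_X_pow_succ_dvd_sub (hrs.trans (sub_dvd_pow_sub_pow r s i)) le_rfl]

theorem statement11_general (F : Type*) [Field F] (f s : PowerSeries F)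
    (N : ℕ) :
    ∃ M : ℕ, ∀ g r : PowerSeries F, PowerSeries.constantCoeff r = 0 →
      (∀ i : ℕ, i ≤ M → PowerSeries.coeff i (g - f) = 0) →
      (∀ i : ℕ, i ≤ M → PowerSeries.coeff i (r - s) = 0) →
      ∀ i : ℕ, i ≤ N → PowerSeries.coeff i (pscomp g r - pscomp f s) = 0 := by
  refine ⟨N, fun g r _ hgf hrs n hn => ?_⟩
  have close : ∀ {φ : F⟦X⟧}, (∀ i ≤ N, coeff i φ = 0) → (X : F⟦X⟧) ^ (n + 1) ∣ φ :=
    fun hφ => X_pow_succ_dvd_iff.mpr fun i hi => hφ i (hi.trans hn)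
  rw [map_sub, sub_eq_zero]
  exact coeff_pscomp_eq_of_X_pow_succ_dvd_sub (close hgf) (close hrs)

/-- the composition map `∘ : F[[t]] × M → F[[t]]` is continuous for the
`t`-adic topology: given `(f, s)` and `N`, there is `M` such that whenever `(g, r)` agrees
with `(f, s)` up to coefficient `M` (and `r ∈ M`), `g ∘ r` agrees with `f ∘ s` up to
coefficient `N`. -/
theorem statement11 (F : Type*) [Field F] (f s : PowerSeries F)
    (hs : PowerSeries.constantCoeff s = 0) (N : ℕ) :
    ∃ M : ℕ, ∀ g r : PowerSeries F, PowerSeries.constantCoeff r = 0 →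
      (∀ i : ℕ, i ≤ M → PowerSeries.coeff i (g - f) = 0) →
      (∀ i : ℕ, i ≤ M → PowerSeries.coeff i (r - s) = 0) →
      ∀ i : ℕ, i ≤ N → PowerSeries.coeff i (pscomp g r - pscomp f s) = 0 :=
  statement11_general F f s N
end
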